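/- arXiv:2603.21353 — 10 statements merged into one kernel-verified Lean document; each statement's English description precedes it below -/
import Mathlib

section
/- Triangle inequality for conditional non-redundancy: for predicates P ⊆ Q ⊆ R ⊆ D^r and any positive integer n, NRD(P | R, n) ≤ NRD(P | Q, n) + NRD(Q | R, n). -/
/-- `E` is a conditionally non-redundant instance of `CSP(P | Q)`: every constraint
`e` has a witnessing assignment giving `e` a value in `Q \ P` and satisfying (for `P`)
exactly the other constraints. -/
def condNonRedundant {D V : Type*} {r : ℕ} (P Q : Set (Fin r → D))
    (E : Finset (Fin r → V)) : Prop :=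
  ∀ e ∈ E, ∃ ψ : V → D, (ψ ∘ e) ∈ Q \ P ∧ ∀ e' ∈ E, (ψ ∘ e' ∈ P ↔ e' ≠ e)

/-- `condNRD P Q V` : the maximum number of constraints of a conditionally
non-redundant instance of `CSP(P | Q)` on the variable set `V`. -/
noncomputable def condNRD (D : Type*) (r : ℕ) (P Q : Set (Fin r → D))
    (V : Type*) [Fintype V] : ℕ :=
  sSup {m : ℕ | ∃ E : Finset (Fin r → V), condNonRedundant P Q E ∧ E.card = m}

/-- Triangle inequality for conditional non-redundancy: for predicates
`P ⊆ Q ⊆ R ⊆ D^r` and any positive `n`,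
`NRD(P | R, n) ≤ NRD(P | Q, n) + NRD(Q | R, n)`. -/
theorem condNRD_triangle {D : Type*} {r : ℕ} (P Q R : Set (Fin r → D))
    (hPQ : P ⊆ Q) (hQR : Q ⊆ R) (n : ℕ) (hn : 0 < n) :
    condNRD D r P R (Fin n) ≤ condNRD D r P Q (Fin n) + condNRD D r Q R (Fin n) := by
  classical
  have hbdd : ∀ (P' Q' : Set (Fin r → D)),
      BddAbove {m : ℕ | ∃ E : Finset (Fin r → Fin n), condNonRedundant P' Q' E ∧ E.card = m} := by
    intro P' Q'
    exact ⟨Fintype.card (Fin r → Fin n), by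
      rintro m ⟨E, -, rfl⟩; exact Finset.card_le_univ E⟩
  unfold condNRD
  have hne : (0 : ℕ) ∈ {m : ℕ | ∃ E : Finset (Fin r → Fin n), condNonRedundant P R E ∧ E.card = m} :=
    ⟨∅, fun e he => absurd he (Finset.notMem_empty e), Finset.card_empty⟩
  refine csSup_le ⟨0, hne⟩ ?_
  rintro m ⟨E, hE, rfl⟩
  set pred : (Fin r → Fin n) → Prop := fun e =>
    ∃ ψ : Fin n → D, (ψ ∘ e) ∈ Q \ P ∧ ∀ e' ∈ E, (ψ ∘ e' ∈ P ↔ e' ≠ e) with hpred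
  set E1 := E.filter pred with hE1
  set E2 := E.filter (fun e => ¬ pred e) with hE2
  have hcard : E1.card + E2.card = E.card := Finset.card_filter_add_card_filter_not _
  have h1 : condNonRedundant P Q E1 := by
    intro e he
    obtain ⟨ψ, hψ1, hψ2⟩ := (Finset.mem_filter.mp he).2
    exact ⟨ψ, hψ1, fun e' he' => hψ2 e' (Finset.mem_filter.mp he').1⟩
  have h2 : condNonRedundant Q R E2 := by
    intro e he
    obtain ⟨heE, hnot⟩ := Finset.mem_filter.mp he
    obtain ⟨ψ, hψ1, hψ2⟩ := hE e heE
    have heQ : (ψ ∘ e) ∉ Q := by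
      intro hQ
      exact hnot ⟨ψ, ⟨hQ, hψ1.2⟩, hψ2⟩
    refine ⟨ψ, ⟨hψ1.1, heQ⟩, ?_⟩
    intro e' he'
    constructor
    · intro hQ'
      intro heq
      subst heq
      exact heQ hQ'
    · intro hne
      exact hPQ ((hψ2 e' (Finset.mem_filter.mp he').1).mpr hne)
  calc E.card = E1.card + E2.card := hcard.symm
    _ ≤ _ + _ := by
        gcongr
        · exact le_csSup (hbdd P Q) ⟨E1, h1, rfl⟩
        · exact le_csSup (hbdd Q R) ⟨E2, h2, rfl⟩
end

section
/- Lower bound from conditional NRD (product construction): suppose {0,1} ⊆ D and R ⊆ D^r satisfies R = (Q × {0}) ∪ (P × {1}) for predicates P ⊆ Q ⊆ D^{r-1}. Then for even n, NRD(R, n) ≥ NRD(P | Q, n/2) · (n/2). More precisely, if X is a conditionally non-redundant instance of CSP(P | Q) on n/2 variables, then X × {n/2+1, ..., n} is a non-redundant instance of CSP(R) on n variables. -/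
/-- Non-redundant instance of `CSP(P)`. -/
def nonRedundant {D V : Type*} {r : ℕ} (P : Set (Fin r → D)) (E : Finset (Fin r → V)) : Prop :=
  ∀ e ∈ E, ∃ ψ : V → D, ∀ e' ∈ E, (ψ ∘ e' ∈ P ↔ e' ≠ e)

/-- `NRD P V` : maximum size of a non-redundant instance of `CSP(P)` on variables `V`. -/
noncomputable def NRD (D : Type*) (r : ℕ) (P : Set (Fin r → D)) (V : Type*) [Fintype V] : ℕ :=
  sSup {m : ℕ | ∃ E : Finset (Fin r → V), nonRedundant P E ∧ E.card = m}

lemma prod_inj {m r : ℕ} : Function.Injective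
    (fun p : (Fin r → Fin m) × Fin m =>
      (Fin.snoc (Sum.inl ∘ p.1) (Sum.inr p.2) : Fin (r + 1) → Fin m ⊕ Fin m)) := by
  rintro ⟨x, j⟩ ⟨y, k⟩ h
  simp only at h
  have h2 := congrFun h (Fin.last r)
  simp only [Fin.snoc_last, Sum.inr.injEq] at h2
  have h1 : x = y := by
    funext i
    have := congrFun h i.castSucc
    simpa [Fin.snoc_castSucc] using this
  simp [h1, h2]

lemma product_nonRedundant {D : Type*} (zero one : D) (hzo : zero ≠ one)
    {r : ℕ} (P Q : Set (Fin r → D)) (hPQ : P ⊆ Q)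
    (R : Set (Fin (r + 1) → D))
    (hR : R = {x | (x ∘ Fin.castSucc ∈ Q ∧ x (Fin.last r) = zero) ∨
                   (x ∘ Fin.castSucc ∈ P ∧ x (Fin.last r) = one)})
    (m : ℕ) (X : Finset (Fin r → Fin m)) (hX : condNonRedundant P Q X) :
    nonRedundant R
      ((X ×ˢ (Finset.univ : Finset (Fin m))).image
        (fun p : (Fin r → Fin m) × Fin m =>
          (Fin.snoc (Sum.inl ∘ p.1) (Sum.inr p.2) : Fin (r + 1) → Fin m ⊕ Fin m))) := by
  intro e he
  simp only [Finset.mem_image, Finset.mem_product, Finset.mem_univ, and_true] at he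
  obtain ⟨⟨x, j⟩, hx, rfl⟩ := he
  obtain ⟨φ, hφQ, hφ⟩ := hX x hx
  refine ⟨Sum.elim φ (fun i => if i = j then one else zero), ?_⟩
  intro e' he'
  simp only [Finset.mem_image, Finset.mem_product, Finset.mem_univ, and_true] at he'
  obtain ⟨⟨y, k⟩, hy, rfl⟩ := he'
  have hcast : (Sum.elim φ (fun i => if i = j then one else zero)) ∘
      (Fin.snoc (Sum.inl ∘ y) (Sum.inr k) : Fin (r+1) → Fin m ⊕ Fin m) ∘ Fin.castSucc = φ ∘ y := by
    funext i; simp [Fin.snoc_castSucc]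
  have hlast : ((Sum.elim φ (fun i => if i = j then one else zero)) ∘
      (Fin.snoc (Sum.inl ∘ y) (Sum.inr k) : Fin (r+1) → Fin m ⊕ Fin m)) (Fin.last r)
      = if k = j then one else zero := by
    simp [Fin.snoc_last]
  have hne : ((Fin.snoc (Sum.inl ∘ y) (Sum.inr k) : Fin (r+1) → Fin m ⊕ Fin m) ≠
      Fin.snoc (Sum.inl ∘ x) (Sum.inr j)) ↔ (y ≠ x ∨ k ≠ j) := by
    constructor
    · intro h
      by_contra hc
      push_neg at hc
      exact h (by rw [hc.1, hc.2])
    · intro h hc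
      have := prod_inj (a₁ := (y,k)) (a₂ := (x,j)) hc
      rcases h with h | h
      · exact h (congrArg Prod.fst this)
      · exact h (congrArg Prod.snd this)
  rw [hR]
  simp only [Set.mem_setOf_eq, Function.comp_assoc]
  rw [hcast, hlast, hne]
  by_cases hk : k = j
  · by_cases hy' : y = x
    · subst hk; subst hy'
      simp only [if_pos rfl, ne_eq, not_true_eq_false, or_false, not_false_eq_true]
      constructor
      · rintro (⟨_, h⟩ | ⟨h, _⟩)
        · exact hzo h.symm
        · exact hφQ.2 h
      · simp
    · subst hk
      simp only [if_pos rfl]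
      constructor
      · intro _; exact Or.inl hy'
      · intro _
        exact Or.inr ⟨(hφ y hy).mpr hy', by simp⟩
  · simp only [if_neg hk]
    constructor
    · intro _; exact Or.inr hk
    · intro _
      refine Or.inl ⟨?_, by simp⟩
      by_cases hy' : y = x
      · subst hy'; exact hφQ.1
      · exact hPQ ((hφ y hy).mpr hy')

/-- Product construction lower bound: if `{0,1} ⊆ D` and
`R = (Q × {0}) ∪ (P × {1})` with `P ⊆ Q ⊆ D^{r}` (arity of `R` is `r+1`), then for
a variable set of even size `2m` (modeled as `Fin m ⊕ Fin m`): every conditionally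
non-redundant instance `X` of `CSP(P | Q)` on `Fin m` gives rise to the non-redundant
instance `X × {m+1, …, 2m}` of `CSP(R)`, and consequently
`NRD(R, 2m) ≥ NRD(P | Q, m) · m`. -/
theorem product_lower_bound {D : Type*} (zero one : D) (hzo : zero ≠ one)
    {r : ℕ} (P Q : Set (Fin r → D)) (hPQ : P ⊆ Q)
    (R : Set (Fin (r + 1) → D))
    (hR : R = {x | (x ∘ Fin.castSucc ∈ Q ∧ x (Fin.last r) = zero) ∨
                   (x ∘ Fin.castSucc ∈ P ∧ x (Fin.last r) = one)})
    (m : ℕ) (X : Finset (Fin r → Fin m)) (hX : condNonRedundant P Q X) :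
    nonRedundant R
      ((X ×ˢ (Finset.univ : Finset (Fin m))).image
        (fun p : (Fin r → Fin m) × Fin m =>
          (Fin.snoc (Sum.inl ∘ p.1) (Sum.inr p.2) : Fin (r + 1) → Fin m ⊕ Fin m))) ∧
    condNRD D r P Q (Fin m) * m ≤ NRD D (r + 1) R (Fin m ⊕ Fin m) := by
  refine ⟨product_nonRedundant zero one hzo P Q hPQ R hR m X hX, ?_⟩
  set S := {n : ℕ | ∃ E : Finset (Fin r → Fin m), condNonRedundant P Q E ∧ E.card = n} with hS
  have hSne : S.Nonempty := ⟨0, ∅, by intro e he; simp at he, rfl⟩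
  have hSbdd : BddAbove S := by
    refine ⟨Fintype.card (Fin r → Fin m), ?_⟩
    rintro n ⟨E, _, rfl⟩
    exact Finset.card_le_univ E
  have hmem : condNRD D r P Q (Fin m) ∈ S := Nat.sSup_mem hSne hSbdd
  obtain ⟨E, hE, hEcard⟩ := hmem
  have hnr := product_nonRedundant zero one hzo P Q hPQ R hR m E hE
  have hcard : ((E ×ˢ (Finset.univ : Finset (Fin m))).image
      (fun p : (Fin r → Fin m) × Fin m =>
        (Fin.snoc (Sum.inl ∘ p.1) (Sum.inr p.2) : Fin (r + 1) → Fin m ⊕ Fin m))).card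
      = condNRD D r P Q (Fin m) * m := by
    rw [Finset.card_image_of_injective _ prod_inj, Finset.card_product, Finset.card_univ,
      Fintype.card_fin, hEcard]
  have hTbdd : BddAbove {n : ℕ | ∃ E : Finset (Fin (r+1) → Fin m ⊕ Fin m),
      nonRedundant R E ∧ E.card = n} := by
    refine ⟨Fintype.card (Fin (r+1) → Fin m ⊕ Fin m), ?_⟩
    rintro n ⟨E, _, rfl⟩
    exact Finset.card_le_univ E
  exact le_csSup hTbdd ⟨_, hnr, hcard⟩
end

section
/- Upper bound from conditional NRD (pigeonhole reduction): suppose {0,1} ⊆ D and R ⊆ D^r satisfies R = (Q × {0}) ∪ (P × {1}) with P ⊆ Q ⊆ D^{r-1}. Then NRD(R | Q × {0,1}, n) ≤ NRD(P | Q, n) · n. -/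
/-- Pigeonhole upper bound: if `{0,1} ⊆ D` and `R = (Q × {0}) ∪ (P × {1})` with
`P ⊆ Q ⊆ D^r` (arity of `R` is `r+1`), then
`NRD(R | Q × {0,1}, n) ≤ NRD(P | Q, n) · n`. -/
theorem pigeonhole_upper_bound {D : Type*} (zero one : D) (hzo : zero ≠ one)
    {r : ℕ} (P Q : Set (Fin r → D)) (hPQ : P ⊆ Q)
    (R Q01 : Set (Fin (r + 1) → D))
    (hR : R = {x | (x ∘ Fin.castSucc ∈ Q ∧ x (Fin.last r) = zero) ∨
                   (x ∘ Fin.castSucc ∈ P ∧ x (Fin.last r) = one)})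
    (hQ01 : Q01 = {x | x ∘ Fin.castSucc ∈ Q ∧
                       (x (Fin.last r) = zero ∨ x (Fin.last r) = one)})
    (n : ℕ) :
    condNRD D (r + 1) R Q01 (Fin n) ≤ condNRD D r P Q (Fin n) * n := by
  classical
  apply csSup_le
  · exact ⟨0, ∅, fun e he => absurd he (Finset.notMem_empty e), rfl⟩
  rintro m ⟨E, hE, rfl⟩
  set K := condNRD D r P Q (Fin n) with hK
  have hbdd : BddAbove {m : ℕ | ∃ E : Finset (Fin r → Fin n),
      condNonRedundant P Q E ∧ E.card = m} := by
    refine ⟨Fintype.card (Fin r → Fin n), ?_⟩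
    rintro m ⟨E', _, rfl⟩
    exact Finset.card_le_univ E'
  have hfib : ∀ v : Fin n,
      (E.filter (fun e => e (Fin.last r) = v)).card ≤ K := by
    intro v
    set Ev := E.filter (fun e => e (Fin.last r) = v) with hEv
    have hmemEv : ∀ e ∈ Ev, e ∈ E ∧ e (Fin.last r) = v := by
      intro e he
      exact Finset.mem_filter.mp he
    set proj : (Fin (r + 1) → Fin n) → (Fin r → Fin n) :=
      fun e => e ∘ Fin.castSucc with hproj
    have hinj : Set.InjOn proj Ev := by
      intro a ha b hb hab
      funext i
      refine Fin.lastCases ?_ ?_ i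
      · rw [(hmemEv a ha).2, (hmemEv b hb).2]
      · intro j
        exact congrFun hab j
    have hcard : Ev.card = (Ev.image proj).card :=
      (Finset.card_image_of_injOn hinj).symm
    have hcnr : condNonRedundant P Q (Ev.image proj) := by
      intro e'' he''
      obtain ⟨e, heEv, rfl⟩ := Finset.mem_image.mp he''
      obtain ⟨heE, hev⟩ := hmemEv e heEv
      obtain ⟨ψ, hψ1, hψ2⟩ := hE e heE
      have hQe : (ψ ∘ e) ∘ Fin.castSucc ∈ Q ∧
          (ψ (e (Fin.last r)) = zero ∨ ψ (e (Fin.last r)) = one) := by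
        have := hψ1.1
        rw [hQ01] at this
        exact this
      have hnotR : ψ ∘ e ∉ R := hψ1.2
      rw [hR] at hnotR
      have hone : ψ (e (Fin.last r)) = one := by
        rcases hQe.2 with h0 | h1
        · exact absurd (Or.inl ⟨hQe.1, h0⟩) hnotR
        · exact h1
      have hnotP : (ψ ∘ e) ∘ Fin.castSucc ∉ P := by
        intro hP
        exact hnotR (Or.inr ⟨hP, hone⟩)
      refine ⟨ψ, ⟨hQe.1, hnotP⟩, ?_⟩
      intro f hf
      obtain ⟨e1, he1Ev, rfl⟩ := Finset.mem_image.mp hf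
      obtain ⟨he1E, he1v⟩ := hmemEv e1 he1Ev
      constructor
      · intro hP hne
        have heq : e1 = e := hinj he1Ev heEv hne
        exact hnotP (heq ▸ hP)
      · intro hne
        have he1ne : e1 ≠ e := by
          intro h; exact hne (by rw [h])
        have hRe1 : ψ ∘ e1 ∈ R := (hψ2 e1 he1E).mpr he1ne
        rw [hR] at hRe1
        rcases hRe1 with ⟨_, h0⟩ | ⟨hP, _⟩
        · exfalso
          have h1 : ψ v = zero := by rw [← he1v]; exact h0
          have h2 : ψ v = one := by rw [← hev]; exact hone
          exact hzo (h1 ▸ h2)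
        · exact hP
    have hmem : (Ev.image proj).card ∈ {m : ℕ | ∃ E : Finset (Fin r → Fin n),
        condNonRedundant P Q E ∧ E.card = m} := ⟨Ev.image proj, hcnr, rfl⟩
    rw [hcard]
    exact le_csSup hbdd hmem
  calc E.card = ∑ v : Fin n, (E.filter (fun e => e (Fin.last r) = v)).card :=
        Finset.card_eq_sum_card_fiberwise (fun e _ => Finset.mem_univ _)
    _ ≤ ∑ _v : Fin n, K := Finset.sum_le_sum (fun v _ => hfib v)
    _ = K * n := by simp [mul_comm]
end

section
/- A Boolean predicate P ⊆ {0,1}^r is balanced if and only if for every t ∈ {0,1}^r, membership of the vector (1, t_1, ..., t_r) in the integer lattice generated by {(1, s_1, ..., s_r) : s ∈ P} implies t ∈ P. -/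
/-- The 0/1 integer vector associated to a Boolean tuple. -/
def toInt {r : ℕ} (t : Fin r → Bool) : Fin r → ℤ := fun i => if t i then 1 else 0

/-- A Boolean predicate `P ⊆ {0,1}^r` is balanced if every alternating sum of an odd
number of tuples of `P` that lands in `{0,1}^r` lies in `P`. -/
def IsBalancedPred {r : ℕ} (P : Set (Fin r → Bool)) : Prop :=
  ∀ m : ℕ, Odd m → ∀ t : Fin m → (Fin r → Bool), (∀ i, t i ∈ P) →
    ∀ s : Fin r → Bool,
      toInt s = ∑ i : Fin m, ((-1 : ℤ) ^ (i : ℕ)) • toInt (t i) → s ∈ P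

/-- `e₁ t = (1, t₁, …, t_r) ∈ ℤ^{r+1}`. -/
def e1 {r : ℕ} (t : Fin r → Bool) : Fin (r + 1) → ℤ := Fin.cons 1 (toInt t)

section helpers

variable {X : Type*} {V : Type*} [AddCommGroup V]

lemma list_sum_getD (f : X → V) (d : X) :
    ∀ (l : List X) (n : ℕ), l.length = n →
      ∑ j : Fin n, f (l.getD (j : ℕ) d) = (l.map f).sum := by
  intro l
  induction l with
  | nil => rintro n rfl; simp
  | cons a l ih =>
    rintro n rfl
    rw [show (a :: l).length = l.length + 1 from rfl, Fin.sum_univ_succ]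
    simp only [List.length_cons, Fin.val_zero, List.getD_cons_zero, Fin.val_succ,
      List.getD_cons_succ, List.map_cons, List.sum_cons]
    rw [ih l.length rfl]

lemma multiset_decomp (f : X → V) :
    ∀ (n : ℕ) (c : Fin n → ℤ) (s : Fin n → X),
    ∃ Mp Mn : Multiset X,
      (∀ x ∈ Mp, ∃ i, x = s i) ∧ (∀ x ∈ Mn, ∃ i, x = s i) ∧
      (Mp.card : ℤ) - (Mn.card : ℤ) = ∑ i, c i ∧
      (Mp.map f).sum - (Mn.map f).sum = ∑ i, c i • f (s i) := by
  intro n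
  induction n with
  | zero => intro c s; exact ⟨0, 0, by simp, by simp, by simp, by simp⟩
  | succ n ih =>
    intro c s
    obtain ⟨Mp, Mn, h1, h2, h3, h4⟩ := ih (fun i => c i.succ) (fun i => s i.succ)
    refine ⟨Mp + (c 0).toNat • {s 0}, Mn + (-(c 0)).toNat • {s 0}, ?_, ?_, ?_, ?_⟩
    · intro x hx
      rcases Multiset.mem_add.1 hx with hx | hx
      · exact (h1 x hx).elim fun i h => ⟨i.succ, h⟩
      · exact ⟨0, by simpa using (Multiset.mem_nsmul.1 hx).2⟩
    · intro x hx
      rcases Multiset.mem_add.1 hx with hx | hx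
      · exact (h2 x hx).elim fun i h => ⟨i.succ, h⟩
      · exact ⟨0, by simpa using (Multiset.mem_nsmul.1 hx).2⟩
    · rw [Fin.sum_univ_succ]
      simp only [Multiset.card_add, Multiset.card_nsmul, Multiset.card_singleton, mul_one]
      push_cast
      omega
    · rw [Fin.sum_univ_succ]
      simp only [Multiset.map_add, Multiset.map_nsmul, Multiset.map_singleton,
        Multiset.sum_add, Multiset.sum_nsmul, Multiset.sum_singleton]
      have hc : ((c 0).toNat : ℤ) - ((-(c 0)).toNat : ℤ) = c 0 := by omega
      have key : (c 0).toNat • f (s 0) - (-(c 0)).toNat • f (s 0) = c 0 • f (s 0) := by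
        rw [← natCast_zsmul, ← natCast_zsmul, ← sub_smul, hc]
      rw [← h4] at *
      abel_nf
      linear_combination (norm := abel_nf) key

end helpers

/-- interleaving equivalence: evens from the left, odds from the right. -/
def interEquiv (q : ℕ) : Fin (q + 1) ⊕ Fin q ≃ Fin (2 * q + 1) where
  toFun x := Sum.elim (fun j : Fin (q+1) => ⟨2 * j, by omega⟩)
    (fun j : Fin q => ⟨2 * j + 1, by omega⟩) x
  invFun i := if h : (i : ℕ) % 2 = 0 then Sum.inl ⟨(i : ℕ) / 2, by omega⟩
    else Sum.inr ⟨(i : ℕ) / 2, by omega⟩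
  left_inv x := by
    rcases x with ⟨j, hj⟩ | ⟨j, hj⟩
    · dsimp only [Sum.elim_inl]
      rw [dif_pos (by omega)]
      simp only [Sum.inl.injEq, Fin.mk.injEq]
      omega
    · dsimp only [Sum.elim_inr]
      rw [dif_neg (by omega)]
      simp only [Sum.inr.injEq, Fin.mk.injEq]
      omega
  right_inv i := by
    dsimp only
    by_cases h : (i : ℕ) % 2 = 0
    · rw [dif_pos h]
      exact Fin.ext (by dsimp only [Sum.elim_inl]; omega)
    · rw [dif_neg h]
      exact Fin.ext (by dsimp only [Sum.elim_inr]; omega)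

/-- `P` is balanced iff membership of `e₁ t` in the integer lattice generated by
`{e₁ s : s ∈ P}` implies `t ∈ P`. -/
theorem balanced_iff_lattice {r : ℕ} (P : Set (Fin r → Bool)) :
    IsBalancedPred P ↔
      ∀ t : Fin r → Bool, e1 t ∈ Submodule.span ℤ (e1 '' P) → t ∈ P := by
  constructor
  · intro hB t h
    rw [Submodule.mem_span_set'] at h
    obtain ⟨n, c, g, hg⟩ := h
    have hexist : ∀ i, ∃ u, u ∈ P ∧ e1 u = (g i : Fin (r+1) → ℤ) := by
      intro i
      rcases (g i).2 with ⟨u, hu, he⟩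
      exact ⟨u, hu, he⟩
    choose s hsP hse using hexist
    simp_rw [← hse] at hg
    have h0 : ∑ i, c i = 1 := by
      have := congrFun hg 0
      simpa [e1, Finset.sum_apply, Pi.smul_apply, Fin.cons_zero] using this
    have ht : toInt t = ∑ i, c i • toInt (s i) := by
      funext j
      have := congrFun hg j.succ
      simpa [e1, Finset.sum_apply, Pi.smul_apply, Fin.cons_succ] using this.symm
    obtain ⟨Mp, Mn, hm1, hm2, hm3, hm4⟩ := multiset_decomp toInt n c s
    rw [h0] at hm3
    set q := Multiset.card Mn with hq
    have hcard : Multiset.card Mp = q + 1 := by omega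
    set Lp := Mp.toList with hLp
    set Ln := Mn.toList with hLn
    have hlp : Lp.length = q + 1 := by rw [hLp, Multiset.length_toList, hcard]
    have hln : Ln.length = q := by rw [hLn, Multiset.length_toList]
    set dflt : Fin r → Bool := fun _ => false with hdflt
    set T : Fin (2 * q + 1) → (Fin r → Bool) := fun i =>
      if (i : ℕ) % 2 = 0 then Lp.getD ((i : ℕ) / 2) dflt else Ln.getD ((i : ℕ) / 2) dflt
      with hT
    have hTP : ∀ i, T i ∈ P := by
      intro i
      simp only [hT]
      by_cases h : (i : ℕ) % 2 = 0
      · rw [if_pos h]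
        have hlt : (i : ℕ) / 2 < Lp.length := by rw [hlp]; omega
        rw [List.getD_eq_getElem _ _ hlt]
        have : Lp[(i : ℕ)/2] ∈ Mp := by
          rw [← Multiset.mem_toList]; exact List.getElem_mem hlt
        obtain ⟨k, hk⟩ := hm1 _ this
        rw [hk]; exact hsP k
      · rw [if_neg h]
        have hlt : (i : ℕ) / 2 < Ln.length := by rw [hln]; omega
        rw [List.getD_eq_getElem _ _ hlt]
        have : Ln[(i : ℕ)/2] ∈ Mn := by
          rw [← Multiset.mem_toList]; exact List.getElem_mem hlt
        obtain ⟨k, hk⟩ := hm2 _ this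
        rw [hk]; exact hsP k
    refine hB (2 * q + 1) ⟨q, by ring⟩ T hTP t ?_
    rw [← Equiv.sum_comp (interEquiv q)
      (fun i : Fin (2*q+1) => ((-1 : ℤ) ^ (i : ℕ)) • toInt (T i)), Fintype.sum_sum_type]
    have hl : ∀ j : Fin (q+1),
        ((-1 : ℤ) ^ ((interEquiv q (Sum.inl j) : Fin (2*q+1)) : ℕ)) •
          toInt (T (interEquiv q (Sum.inl j))) = toInt (Lp.getD (j : ℕ) dflt) := by
      intro j
      have hv : ((interEquiv q (Sum.inl j) : Fin (2*q+1)) : ℕ) = 2 * (j : ℕ) := rfl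
      rw [hv]
      have hpow : ((-1 : ℤ) ^ (2 * (j : ℕ))) = 1 := by
        rw [pow_mul]; norm_num
      rw [hpow, one_smul]
      simp only [hT, hv]
      rw [if_pos (by omega), show 2 * (j : ℕ) / 2 = (j : ℕ) from by omega]
    have hr : ∀ j : Fin q,
        ((-1 : ℤ) ^ ((interEquiv q (Sum.inr j) : Fin (2*q+1)) : ℕ)) •
          toInt (T (interEquiv q (Sum.inr j))) = -toInt (Ln.getD (j : ℕ) dflt) := by
      intro j
      have hv : ((interEquiv q (Sum.inr j) : Fin (2*q+1)) : ℕ) = 2 * (j : ℕ) + 1 := rfl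
      rw [hv]
      have hpow : ((-1 : ℤ) ^ (2 * (j : ℕ) + 1)) = -1 := by
        rw [pow_succ, pow_mul]; norm_num
      rw [hpow]
      simp only [hT, hv]
      rw [if_neg (by omega)]
      have : (2 * (j : ℕ) + 1) / 2 = (j : ℕ) := by omega
      rw [this, neg_smul, one_smul]
    rw [Finset.sum_congr rfl fun j _ => hl j, Finset.sum_congr rfl fun j _ => hr j]
    rw [Finset.sum_neg_distrib]
    rw [list_sum_getD toInt dflt Lp (q+1) hlp, list_sum_getD toInt dflt Ln q hln]
    have hmp : (Lp.map toInt).sum = (Mp.map toInt).sum := by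
      conv_rhs => rw [← Multiset.coe_toList Mp]
      rw [Multiset.map_coe, Multiset.sum_coe, hLp]
    have hmn : (Ln.map toInt).sum = (Mn.map toInt).sum := by
      conv_rhs => rw [← Multiset.coe_toList Mn]
      rw [Multiset.map_coe, Multiset.sum_coe, hLn]
    rw [hmp, hmn, ← sub_eq_add_neg, hm4, ht]
  · intro hL m hm t htP s hs
    apply hL s
    have : e1 s = ∑ i : Fin m, ((-1 : ℤ) ^ (i : ℕ)) • e1 (t i) := by
      funext j
      rw [Finset.sum_apply]
      refine Fin.cases ?_ ?_ j
      · simp only [e1, Fin.cons_zero, Pi.smul_apply, smul_eq_mul, mul_one]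
        rw [Fin.sum_univ_eq_sum_range (fun i => (-1 : ℤ) ^ i), neg_one_geom_sum,
          if_neg (Nat.not_even_iff_odd.2 hm)]
      · intro k
        have := congrFun hs k
        simpa [e1, Fin.cons_succ, Finset.sum_apply, Pi.smul_apply] using this
    rw [this]
    exact Submodule.sum_mem _ fun i _ =>
      Submodule.smul_mem _ _ (Submodule.subset_span ⟨t i, htP i, rfl⟩)
end

section
/- If P ⊆ {0,1}^r is balanced (i.e., closed under alternating sums of odd length that land in {0,1}^r), and there exist integers z_t for t ∈ P with Σ z_t = 1 and t' = Σ_{t ∈ P} z_t · t ∈ {0,1}^r (sum in Z^r), then t' ∈ P. -/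
/-!
Write `z = z⁺ - z⁻` and list every `t ∈ P` with multiplicity `z⁺ t` in `A` and `z⁻ t` in `B`.
Since `∑ z = 1`, `A` has one entry more than `B`, so the interleaving `a₀, b₀, a₁, b₁, …, aₙ`
is an odd tuple from `P` whose alternating sum is `∑ A - ∑ B = ∑ z_t t`.
-/

theorem List.exists_odd_alternating_sum_eq_sub {α R M : Type*} [Ring R] [AddCommGroup M]
    [Module R M] (g : α → M) (A B : List α) (h : A.length = B.length + 1) :
    ∃ m, Odd m ∧ ∃ f : Fin m → α, (∀ i, f i ∈ A ∨ f i ∈ B) ∧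
      ∑ i : Fin m, (-1 : R) ^ (i : ℕ) • g (f i) = (A.map g).sum - (B.map g).sum := by
  induction B generalizing A with
  | nil =>
    obtain ⟨a, rfl⟩ := List.length_eq_one_iff.mp h
    exact ⟨1, odd_one, fun _ => a, by simp, by simp⟩
  | cons b B ih =>
    obtain ⟨a, A, rfl⟩ := List.exists_cons_of_length_eq_add_one h
    obtain ⟨m, hm, f, hf, hsum⟩ := ih A (by simpa using h)
    refine ⟨m + 1 + 1, hm.add_even even_two, Fin.cons a (Fin.cons b f), ?_, ?_⟩
    · refine Fin.cases (by simp) (Fin.cases (by simp) fun j => ?_)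
      simpa using (hf j).imp (List.mem_cons_of_mem a) (List.mem_cons_of_mem b)
    · rw [Fin.sum_univ_succ, Fin.sum_univ_succ]
      simp [pow_succ, hsum]
      abel

theorem Finset.exists_list_sum_map_eq_sum_nsmul {α M : Type*} [AddCommMonoid M] (P : Finset α)
    (w : α → ℕ) (g : α → M) :
    ∃ A : List α, (∀ a ∈ A, a ∈ P) ∧ A.length = ∑ t ∈ P, w t ∧
      (A.map g).sum = ∑ t ∈ P, w t • g t := by
  refine ⟨(∑ t ∈ P, w t • {t} : Multiset α).toList, by simp +contextual,
    by simp [Multiset.card_sum], ?_⟩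
  rw [Multiset.sum_map_toList, ← Multiset.coe_mapAddMonoidHom, ← Multiset.coe_sumAddMonoidHom,
    map_sum, map_sum]
  simp [Multiset.map_nsmul, Multiset.sum_nsmul]

theorem Finset.exists_lists_sum_map_sub_eq_sum_zsmul {α M : Type*} [AddCommGroup M]
    (P : Finset α) (z : α → ℤ) (hz : ∑ t ∈ P, z t = 1) (g : α → M) :
    ∃ A B : List α, (∀ a ∈ A, a ∈ P) ∧ (∀ b ∈ B, b ∈ P) ∧ A.length = B.length + 1 ∧
      (A.map g).sum - (B.map g).sum = ∑ t ∈ P, z t • g t := by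
  obtain ⟨A, hA, hAlen, hAsum⟩ := P.exists_list_sum_map_eq_sum_nsmul (fun t => (z t).toNat) g
  obtain ⟨B, hB, hBlen, hBsum⟩ := P.exists_list_sum_map_eq_sum_nsmul (fun t => (-z t).toNat) g
  refine ⟨A, B, hA, hB, ?_, ?_⟩
  · have : ∑ t ∈ P, ((z t).toNat : ℤ) = ∑ t ∈ P, ((-z t).toNat : ℤ) + 1 := by
      rw [← hz, ← sub_eq_iff_eq_add', ← Finset.sum_sub_distrib]
      simp only [Int.toNat_sub_toNat_neg]
    rw [hAlen, hBlen]
    exact_mod_cast this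
  · rw [hAsum, hBsum, ← Finset.sum_sub_distrib]
    refine Finset.sum_congr rfl fun t _ => ?_
    rw [← natCast_zsmul, ← natCast_zsmul, ← sub_smul, Int.toNat_sub_toNat_neg]

/-- If `P` is balanced and `t' = Σ_{t ∈ P} z_t · t` is a 0/1 vector where the integer
coefficients satisfy `Σ z_t = 1`, then `t' ∈ P`. -/
theorem balanced_affine_combination {r : ℕ} (P : Finset (Fin r → Bool))
    (hP : IsBalancedPred (↑P : Set (Fin r → Bool)))
    (z : (Fin r → Bool) → ℤ) (hz : ∑ t ∈ P, z t = 1)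
    (t' : Fin r → Bool) (ht' : toInt t' = ∑ t ∈ P, z t • toInt t) :
    t' ∈ P := by
  obtain ⟨A, B, hA, hB, hlen, hAB⟩ := P.exists_lists_sum_map_sub_eq_sum_zsmul z hz toInt
  obtain ⟨m, hm, f, hf, hsum⟩ := A.exists_odd_alternating_sum_eq_sub (R := ℤ) toInt B hlen
  refine hP m hm f (fun i => (hf i).elim (hA _) (hB _)) t' ?_
  rw [ht', ← hAB, hsum]
end

section
/- Every linear 3-uniform tripartite hypergraph is a conditionally non-redundant instance of CSP(P | Q) where P = {000, 001, 010, 100} and Q = P ∪ {111}: if H = (V, E) is a tripartite 3-uniform hypergraph in which any two distinct hyperedges intersect in at most one vertex, then for each e ∈ E the assignment ψ_e mapping vertices of e to 1 and all others to 0 witnesses conditional non-redundancy, so NRD(P | Q, n) ≥ |E| for any such H on n vertices. -/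
/-! Linearity means that any hyperedge `e' ≠ e` meets `e` in at most one vertex, so the indicator
of `e` gives `e'` Hamming weight at most one (a triple in `P`) while it gives `e` itself `111`.
Placing the parts `A`, `B`, `C` side by side in `A ⊕ B ⊕ C` keeps distinct hyperedges distinct. -/

/-- `P = {000, 001, 010, 100}`: Boolean triples of Hamming weight at most 1. -/
def P3 : Set (Bool × Bool × Bool) :=
  {(false, false, false), (false, false, true), (false, true, false), (true, false, false)}

/-- `Q = P ∪ {111}`. -/
def Q3 : Set (Bool × Bool × Bool) := insert (true, true, true) P3

/-- Maximum size of a conditionally non-redundant instance of `CSP(P | Q)`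
(predicates of arity 3, constraints given as triples of variables from `V`). -/
noncomputable def condNRD3 (P Q : Set (Bool × Bool × Bool)) (V : Type*) [Fintype V] : ℕ :=
  sSup {m : ℕ | ∃ E : Finset (V × V × V),
    (∀ e ∈ E, ∃ ψ : V → Bool,
      (ψ e.1, ψ e.2.1, ψ e.2.2) ∈ Q \ P ∧
      ∀ e' ∈ E, ((ψ e'.1, ψ e'.2.1, ψ e'.2.2) ∈ P ↔ e' ≠ e)) ∧
    E.card = m}

-- `sSup` of an unbounded set of naturals would be `0`; here sizes are at most `|V|³`.
theorem card_le_condNRD3 {V : Type*} [Fintype V] {P Q : Set (Bool × Bool × Bool)}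
    (E : Finset (V × V × V))
    (hE : ∀ e ∈ E, ∃ ψ : V → Bool, (ψ e.1, ψ e.2.1, ψ e.2.2) ∈ Q \ P ∧
      ∀ e' ∈ E, ((ψ e'.1, ψ e'.2.1, ψ e'.2.2) ∈ P ↔ e' ≠ e)) :
    E.card ≤ condNRD3 P Q V := by
  refine le_csSup ⟨Fintype.card (V × V × V), ?_⟩ ⟨E, hE, rfl⟩
  rintro m ⟨E', -, rfl⟩
  exact E'.card_le_univ

theorem mem_P3_iff (a b c : Bool) :
    (a, b, c) ∈ P3 ↔ ¬(a ∧ b) ∧ ¬(a ∧ c) ∧ ¬(b ∧ c) := by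
  cases a <;> cases b <;> cases c <;> simp [P3]

theorem true_triple_mem_Q3_diff_P3 : (true, true, true) ∈ Q3 \ P3 := by
  simp [Q3, P3]

section Tripartite

variable {A B C : Type*}

def tripleToSum (e : A × B × C) : (A ⊕ B ⊕ C) × (A ⊕ B ⊕ C) × (A ⊕ B ⊕ C) :=
  (Sum.inl e.1, Sum.inr (Sum.inl e.2.1), Sum.inr (Sum.inr e.2.2))

theorem tripleToSum_injective : Function.Injective (tripleToSum : A × B × C → _) := by
  rintro ⟨a, b, c⟩ ⟨a', b', c'⟩ h
  simp_all [tripleToSum]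

variable [DecidableEq A] [DecidableEq B] [DecidableEq C]

def edgeIndicator (e : A × B × C) (x : A ⊕ B ⊕ C) : Bool :=
  decide (x = Sum.inl e.1 ∨ x = Sum.inr (Sum.inl e.2.1) ∨ x = Sum.inr (Sum.inr e.2.2))

theorem edgeIndicator_on_edge (e e' : A × B × C) :
    (edgeIndicator e (Sum.inl e'.1), edgeIndicator e (Sum.inr (Sum.inl e'.2.1)),
      edgeIndicator e (Sum.inr (Sum.inr e'.2.2))) =
    (decide (e'.1 = e.1), decide (e'.2.1 = e.2.1), decide (e'.2.2 = e.2.2)) := by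
  simp [edgeIndicator]

theorem edgeIndicator_on_self (e : A × B × C) :
    (edgeIndicator e (Sum.inl e.1), edgeIndicator e (Sum.inr (Sum.inl e.2.1)),
      edgeIndicator e (Sum.inr (Sum.inr e.2.2))) ∈ Q3 \ P3 := by
  simpa [edgeIndicator_on_edge] using true_triple_mem_Q3_diff_P3

theorem edgeIndicator_on_edge_mem_P3 {e e' : A × B × C}
    (h : ¬(e'.1 = e.1 ∧ e'.2.1 = e.2.1) ∧ ¬(e'.1 = e.1 ∧ e'.2.2 = e.2.2) ∧
      ¬(e'.2.1 = e.2.1 ∧ e'.2.2 = e.2.2)) :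
    (edgeIndicator e (Sum.inl e'.1), edgeIndicator e (Sum.inr (Sum.inl e'.2.1)),
      edgeIndicator e (Sum.inr (Sum.inr e'.2.2))) ∈ P3 := by
  simpa [edgeIndicator_on_edge, mem_P3_iff] using h

end Tripartite

/-- Every linear tripartite 3-uniform hypergraph (with parts `A`, `B`, `C`) is a
conditionally non-redundant instance of `CSP(P | Q)` with `P = {000,001,010,100}` and
`Q = P ∪ {111}`: for each hyperedge `e`, the assignment mapping exactly the vertices
of `e` to `1` is a witness; consequently `NRD(P | Q) ≥ |E|` on the vertex set
`A ⊕ B ⊕ C`. -/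
theorem linear_hypergraph_cond_nonredundant
    {A B C : Type*} [Fintype A] [Fintype B] [Fintype C]
    [DecidableEq A] [DecidableEq B] [DecidableEq C]
    (E : Finset (A × B × C))
    (hlinear : ∀ e ∈ E, ∀ e' ∈ E, e ≠ e' →
      ¬(e.1 = e'.1 ∧ e.2.1 = e'.2.1) ∧ ¬(e.1 = e'.1 ∧ e.2.2 = e'.2.2) ∧
      ¬(e.2.1 = e'.2.1 ∧ e.2.2 = e'.2.2)) :
    (∀ e ∈ E,
      let ψ : (A ⊕ B ⊕ C) → Bool := fun x =>
        decide (x = Sum.inl e.1 ∨ x = Sum.inr (Sum.inl e.2.1) ∨ x = Sum.inr (Sum.inr e.2.2))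
      (ψ (Sum.inl e.1), ψ (Sum.inr (Sum.inl e.2.1)), ψ (Sum.inr (Sum.inr e.2.2))) ∈ Q3 \ P3 ∧
      ∀ e' ∈ E, e' ≠ e →
        (ψ (Sum.inl e'.1), ψ (Sum.inr (Sum.inl e'.2.1)), ψ (Sum.inr (Sum.inr e'.2.2))) ∈ P3) ∧
    E.card ≤ condNRD3 P3 Q3 (A ⊕ B ⊕ C) := by
  have witness : ∀ e ∈ E, ∀ e' ∈ E, e' ≠ e →
      (edgeIndicator e (Sum.inl e'.1), edgeIndicator e (Sum.inr (Sum.inl e'.2.1)),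
        edgeIndicator e (Sum.inr (Sum.inr e'.2.2))) ∈ P3 := fun e he e' he' hne =>
    edgeIndicator_on_edge_mem_P3 (hlinear e' he' e he hne)
  refine ⟨fun e he => ⟨edgeIndicator_on_self e, witness e he⟩, ?_⟩
  rw [← Finset.card_image_of_injective E tripleToSum_injective]
  refine card_le_condNRD3 _ fun t ht => ?_
  obtain ⟨e, he, rfl⟩ := Finset.mem_image.mp ht
  refine ⟨edgeIndicator e, edgeIndicator_on_self e, fun t' ht' => ?_⟩
  obtain ⟨e', he', rfl⟩ := Finset.mem_image.mp ht'
  rw [tripleToSum_injective.ne_iff]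
  refine ⟨fun hP heq => ?_, witness e he e' he'⟩
  subst heq
  exact (edgeIndicator_on_self e').2 hP
end

section
/- Matching structure in conditionally non-redundant instances of P'_299 | Q'_299: let E ⊆ [n] × [n] × [n] be a conditionally non-redundant instance of CSP(P' | Q') where P' = {001, 011, 101, 110} and Q' = P' ∪ {000}. For any fixed c ∈ [n], the bipartite graph E[c] := {(a, b) : (a, b, c) ∈ E} is a matching: no two pairs in E[c] share a first coordinate or a second coordinate. -/
/-- `P' = {001, 011, 101, 110}`. -/
def P299' : Set (Bool × Bool × Bool) :=
  {(false, false, true), (false, true, true), (true, false, true), (true, true, false)}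

/-- Matching structure: if `E ⊆ [n] × [n] × [n]` is a conditionally non-redundant
instance of `CSP(P' | Q')` with `P' = {001,011,101,110}` and `Q' = P' ∪ {000}` (the
three coordinates ranging over disjoint copies `A`, `B`, `C` of `[n]`), then for every
fixed `c`, the set `E[c] = {(a,b) : (a,b,c) ∈ E}` is a matching: no two distinct
pairs share a first or a second coordinate. -/
theorem cond_nonredundant_matching (n : ℕ) (E : Finset (Fin n × Fin n × Fin n))
    (hE : ∀ e ∈ E, ∃ ψ : (Fin n ⊕ Fin n ⊕ Fin n) → Bool,
      ψ (Sum.inl e.1) = false ∧ ψ (Sum.inr (Sum.inl e.2.1)) = false ∧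
      ψ (Sum.inr (Sum.inr e.2.2)) = false ∧
      ∀ e' ∈ E, e' ≠ e →
        (ψ (Sum.inl e'.1), ψ (Sum.inr (Sum.inl e'.2.1)), ψ (Sum.inr (Sum.inr e'.2.2))) ∈ P299') :
    ∀ c : Fin n, ∀ e ∈ E, ∀ e' ∈ E, e.2.2 = c → e'.2.2 = c → e ≠ e' →
      e.1 ≠ e'.1 ∧ e.2.1 ≠ e'.2.1 := by
  intro c e he e' he' hc hc' hne
  obtain ⟨ψ, ha, hb, hcf, hall⟩ := hE e he
  have hmem := hall e' he' (Ne.symm hne)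
  have hψc : ψ (Sum.inr (Sum.inr e'.2.2)) = false := by
    rw [hc']; rw [hc] at hcf; exact hcf
  simp only [P299', Set.mem_insert_iff, Set.mem_singleton_iff, Prod.mk.injEq, hψc] at hmem
  rcases hmem with ⟨_, _, h⟩ | ⟨_, _, h⟩ | ⟨_, _, h⟩ | ⟨h1, h2, _⟩
  · exact absurd h (by simp)
  · exact absurd h (by simp)
  · exact absurd h (by simp)
  · constructor
    · intro hcontra
      rw [hcontra, h1] at ha; exact absurd ha (by simp)
    · intro hcontra
      rw [hcontra, h2] at hb; exact absurd hb (by simp)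
end

section
/- Bounded induced intersection: let E ⊆ [n]^3 be a conditionally non-redundant instance of CSP(P' | Q') with P' = {001, 011, 101, 110}, Q' = P' ∪ {000}, and define E[c] := {(a,b) : (a,b,c) ∈ E} for c ∈ [n]. Then for any c ≠ c' ∈ [n], the vertex set of E[c] induces at most 2 edges of E[c'] (i.e., at most 2 pairs (a,b) ∈ E[c'] have both a and b appearing as endpoints of edges in E[c]). -/
/-- The bipartite graph `E[c] = {(a,b) : (a,b,c) ∈ E}`. -/
def graphSlice (n : ℕ) (E : Finset (Fin n × Fin n × Fin n)) (c : Fin n) :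
    Finset (Fin n × Fin n) :=
  (E.filter fun t => t.2.2 = c).image fun t => (t.1, t.2.1)

lemma mem_graphSlice {n : ℕ} {E : Finset (Fin n × Fin n × Fin n)} {c : Fin n}
    {a b : Fin n} : (a, b) ∈ graphSlice n E c ↔ (a, b, c) ∈ E := by
  simp only [graphSlice, Finset.mem_image, Finset.mem_filter, Prod.mk.injEq]
  constructor
  · rintro ⟨⟨x, y, z⟩, ⟨hEm, hz⟩, rfl, rfl⟩
    exact hz ▸ hEm
  · intro h
    exact ⟨(a, b, c), ⟨h, rfl⟩, rfl, rfl⟩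

section
variable {n : ℕ} {E : Finset (Fin n × Fin n × Fin n)}

/-- Distinct edges of a slice have distinct first coordinates and distinct second ones. -/
lemma distinct_coords
    (hE : ∀ e ∈ E, ∃ ψ : (Fin n ⊕ Fin n ⊕ Fin n) → Bool,
      ψ (Sum.inl e.1) = false ∧ ψ (Sum.inr (Sum.inl e.2.1)) = false ∧
      ψ (Sum.inr (Sum.inr e.2.2)) = false ∧
      ∀ e' ∈ E, e' ≠ e →
        (ψ (Sum.inl e'.1), ψ (Sum.inr (Sum.inl e'.2.1)), ψ (Sum.inr (Sum.inr e'.2.2))) ∈ P299')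
    {a1 b1 a2 b2 c' : Fin n}
    (h1 : (a1, b1, c') ∈ E) (h2 : (a2, b2, c') ∈ E) (hne : (a1, b1) ≠ (a2, b2)) :
    a1 ≠ a2 ∧ b1 ≠ b2 := by
  obtain ⟨ψ, hψ1, hψ2, hψ3, hψ⟩ := hE (a1, b1, c') h1
  have hne' : ((a2, b2, c') : Fin n × Fin n × Fin n) ≠ (a1, b1, c') := by
    intro h
    exact hne (by
      have h1' := congrArg (fun t : Fin n × Fin n × Fin n => t.1) h
      have h2' := congrArg (fun t : Fin n × Fin n × Fin n => t.2.1) h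
      simp at h1' h2'
      simp [h1', h2'])
  have hA := hψ (a2, b2, c') h2 hne'
  simp only at hA
  rw [hψ3] at hA
  have hkey : ψ (Sum.inl a2) = true ∧ ψ (Sum.inr (Sum.inl b2)) = true := by
    revert hA
    cases hx : ψ (Sum.inl a2) <;> cases hy : ψ (Sum.inr (Sum.inl b2)) <;> simp [P299']
  constructor
  · intro h; rw [h, hkey.1] at hψ1; exact Bool.noConfusion hψ1
  · intro h; rw [h, hkey.2] at hψ2; exact Bool.noConfusion hψ2

/-- The key lemma: any induced edge whose first coordinate differs from `a1`
must have second coordinate equal to the witness `β1`. -/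
lemma key_lemma
    (hE : ∀ e ∈ E, ∃ ψ : (Fin n ⊕ Fin n ⊕ Fin n) → Bool,
      ψ (Sum.inl e.1) = false ∧ ψ (Sum.inr (Sum.inl e.2.1)) = false ∧
      ψ (Sum.inr (Sum.inr e.2.2)) = false ∧
      ∀ e' ∈ E, e' ≠ e →
        (ψ (Sum.inl e'.1), ψ (Sum.inr (Sum.inl e'.2.1)), ψ (Sum.inr (Sum.inr e'.2.2))) ∈ P299')
    {c c' a1 b1 β1 aj bj βj αj : Fin n} (hcc' : c ≠ c')
    (hg1 : (a1, b1, c') ∈ E) (hu1 : (a1, β1, c) ∈ E)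
    (hgj : (aj, bj, c') ∈ E) (huj : (aj, βj, c) ∈ E) (hvj : (αj, bj, c) ∈ E)
    (ha : aj ≠ a1) : bj = β1 := by
  obtain ⟨φ, hφ1, hφ2, hφ3, hφ⟩ := hE (a1, β1, c) hu1
  simp only at hφ1 hφ2 hφ3
  -- φ(c') = true
  have hc' : φ (Sum.inr (Sum.inr c')) = true := by
    have hA := hφ (a1, b1, c') hg1
      (by intro h; exact hcc' (congrArg (fun t : Fin n × Fin n × Fin n => t.2.2) h).symm)
    simp only at hA
    rw [hφ1] at hA
    revert hA
    cases hx : φ (Sum.inr (Sum.inl b1)) <;> cases hy : φ (Sum.inr (Sum.inr c')) <;>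
      simp [P299']
  -- φ(aj) = true
  have haj : φ (Sum.inl aj) = true := by
    have hA := hφ (aj, βj, c) huj
      (by intro h; exact ha (congrArg (fun t : Fin n × Fin n × Fin n => t.1) h))
    simp only at hA
    rw [hφ3] at hA
    revert hA
    cases hx : φ (Sum.inl aj) <;> cases hy : φ (Sum.inr (Sum.inl βj)) <;> simp [P299']
  -- φ(bj) = false
  have hbj : φ (Sum.inr (Sum.inl bj)) = false := by
    have hA := hφ (aj, bj, c') hgj
      (by intro h; exact hcc' (congrArg (fun t : Fin n × Fin n × Fin n => t.2.2) h).symm)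
    simp only at hA
    rw [haj, hc'] at hA
    revert hA
    cases hx : φ (Sum.inr (Sum.inl bj)) <;> simp [P299']
  -- now (αj, bj, c) must equal (a1, β1, c)
  by_cases hv : ((αj, bj, c) : Fin n × Fin n × Fin n) = (a1, β1, c)
  · exact congrArg (fun t : Fin n × Fin n × Fin n => t.2.1) hv
  · exfalso
    have hA := hφ (αj, bj, c) hvj hv
    simp only at hA
    rw [hφ3, hbj] at hA
    revert hA
    cases hx : φ (Sum.inl αj) <;> simp [P299']

end

/-- Bounded induced intersection: if `E ⊆ [n]³` is a conditionally non-redundant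
instance of `CSP(P' | Q')` with `P' = {001,011,101,110}`, `Q' = P' ∪ {000}`, then for
any `c ≠ c'`, the vertex set of `E[c]` induces at most 2 edges of `E[c']`. -/
theorem bounded_induced_intersection (n : ℕ) (E : Finset (Fin n × Fin n × Fin n))
    (hE : ∀ e ∈ E, ∃ ψ : (Fin n ⊕ Fin n ⊕ Fin n) → Bool,
      ψ (Sum.inl e.1) = false ∧ ψ (Sum.inr (Sum.inl e.2.1)) = false ∧
      ψ (Sum.inr (Sum.inr e.2.2)) = false ∧
      ∀ e' ∈ E, e' ≠ e →
        (ψ (Sum.inl e'.1), ψ (Sum.inr (Sum.inl e'.2.1)), ψ (Sum.inr (Sum.inr e'.2.2))) ∈ P299') :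
    ∀ c c' : Fin n, c ≠ c' →
      ((graphSlice n E c').filter fun p =>
        p.1 ∈ (graphSlice n E c).image Prod.fst ∧ p.2 ∈ (graphSlice n E c).image Prod.snd).card ≤ 2 := by
  intro c c' hcc'
  by_contra hlt
  push_neg at hlt
  rw [Finset.two_lt_card_iff] at hlt
  obtain ⟨p1, p2, p3, h1, h2, h3, h12, h13, h23⟩ := hlt
  -- unpack memberships
  have unpack : ∀ p : Fin n × Fin n,
      p ∈ ((graphSlice n E c').filter fun p =>
        p.1 ∈ (graphSlice n E c).image Prod.fst ∧ p.2 ∈ (graphSlice n E c).image Prod.snd) →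
      (p.1, p.2, c') ∈ E ∧ (∃ β, (p.1, β, c) ∈ E) ∧ (∃ α, (α, p.2, c) ∈ E) := by
    intro p hp
    rw [Finset.mem_filter] at hp
    obtain ⟨hg, hf, hs⟩ := hp
    refine ⟨mem_graphSlice.mp hg, ?_, ?_⟩
    · rw [Finset.mem_image] at hf
      obtain ⟨q, hq, hq1⟩ := hf
      exact ⟨q.2, by rw [← hq1]; exact mem_graphSlice.mp hq⟩
    · rw [Finset.mem_image] at hs
      obtain ⟨q, hq, hq2⟩ := hs
      exact ⟨q.1, by rw [← hq2]; exact mem_graphSlice.mp hq⟩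
  obtain ⟨hg1, ⟨β1, hu1⟩, ⟨α1, hv1⟩⟩ := unpack p1 h1
  obtain ⟨hg2, ⟨β2, hu2⟩, ⟨α2, hv2⟩⟩ := unpack p2 h2
  obtain ⟨hg3, ⟨β3, hu3⟩, ⟨α3, hv3⟩⟩ := unpack p3 h3
  have hne12 : ((p1.1, p1.2) : Fin n × Fin n) ≠ (p2.1, p2.2) := by simpa using h12
  have hne13 : ((p1.1, p1.2) : Fin n × Fin n) ≠ (p3.1, p3.2) := by simpa using h13
  have hne23 : ((p2.1, p2.2) : Fin n × Fin n) ≠ (p3.1, p3.2) := by simpa using h23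
  have d12 := distinct_coords hE hg1 hg2 hne12
  have d13 := distinct_coords hE hg1 hg3 hne13
  have d23 := distinct_coords hE hg2 hg3 hne23
  have hb2 : p2.2 = β1 := key_lemma hE hcc' hg1 hu1 hg2 hu2 hv2 (Ne.symm d12.1)
  have hb3 : p3.2 = β1 := key_lemma hE hcc' hg1 hu1 hg3 hu3 hv3 (Ne.symm d13.1)
  exact d23.2 (hb2.trans hb3.symm)
end

section
/- RS-graph lower bound construction: let G be a bipartite graph on L ⊔ R with |L| = |R| = n whose edge set is partitioned into t induced matchings M_1, ..., M_t each of size r. Then the instance with variables x_1,...,x_n, y_1,...,y_n, z_1,...,z_t and constraints {(x_u, y_v, z_i) : (u,v) ∈ M_i, i ∈ [t]} is a conditionally non-redundant instance of CSP(P | Q) with P = {001, 011, 101, 110} and Q = P ∪ {000}, of size t·r. -/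
theorem mem_P299'_iff {a b c : Bool} : (a, b, c) ∈ P299' ↔ c = !(a && b) := by
  cases a <;> cases b <;> cases c <;> simp [P299']

section TaggedEdges

variable {α β ι : Type*} [DecidableEq α] [DecidableEq β] [DecidableEq ι] [Fintype ι]
  (M : ι → Finset (α × β))

def taggedEdges : Finset (α × β × ι) :=
  Finset.univ.biUnion fun i => (M i).image fun p => (p.1, p.2, i)

variable {M}

theorem mem_taggedEdges {e : α × β × ι} : e ∈ taggedEdges M ↔ (e.1, e.2.1) ∈ M e.2.2 := by
  simp only [taggedEdges, Finset.mem_biUnion, Finset.mem_univ, true_and, Finset.mem_image]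
  constructor
  · rintro ⟨i, p, hp, rfl⟩
    exact hp
  · intro he
    exact ⟨e.2.2, _, he, rfl⟩

theorem card_taggedEdges : (taggedEdges M).card = ∑ i, (M i).card := by
  rw [taggedEdges, Finset.card_biUnion]
  · refine Finset.sum_congr rfl fun i _ => Finset.card_image_of_injective _ ?_
    intro p q h
    simp only [Prod.mk.injEq] at h
    exact Prod.ext h.1 h.2.1
  · intro i _ j _ hij
    simp only [Function.onFun, Finset.disjoint_left, Finset.mem_image]
    rintro _ ⟨p, -, rfl⟩ ⟨q, -, hq⟩
    exact hij (congrArg (fun x => x.2.2) hq).symm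

theorem tag_eq_iff_of_inducedMatchings
    (hmatching : ∀ i, ∀ p ∈ M i, ∀ q ∈ M i, p ≠ q → p.1 ≠ q.1 ∧ p.2 ≠ q.2)
    (hdisjoint : ∀ i j, i ≠ j → Disjoint (M i) (M j))
    (hinduced : ∀ i j, ∀ p ∈ M j,
      (∃ q ∈ M i, p.1 = q.1) → (∃ q ∈ M i, p.2 = q.2) → p ∈ M i)
    {e e' : α × β × ι} (he : e ∈ taggedEdges M) (he' : e' ∈ taggedEdges M) (hne : e' ≠ e) :
    e'.2.2 = e.2.2 ↔
      ((∃ q ∈ M e.2.2, e'.1 = q.1) ∧ e'.1 ≠ e.1) ∧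
      ((∃ q ∈ M e.2.2, e'.2.1 = q.2) ∧ e'.2.1 ≠ e.2.1) := by
  obtain ⟨u, v, i⟩ := e
  obtain ⟨a, b, j⟩ := e'
  rw [mem_taggedEdges] at he he'
  constructor
  · rintro (rfl : j = i)
    have hab : (a, b) ≠ (u, v) := fun h => hne (by simp_all)
    obtain ⟨hau, hbv⟩ := hmatching j _ he' _ he hab
    exact ⟨⟨⟨_, he', rfl⟩, hau⟩, ⟨_, he', rfl⟩, hbv⟩
  · rintro ⟨⟨ha, -⟩, hb, -⟩
    by_contra hji
    exact Finset.disjoint_left.mp (hdisjoint i j (Ne.symm hji))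
      (hinduced i j _ he' ha hb) he'

end TaggedEdges

/-- RS-graph lower bound construction: let `G` be a bipartite graph on `L ⊔ R` with
`|L| = |R| = n` whose edge set is partitioned into `t` induced matchings
`M 0, …, M (t-1)`, each of size `r`. Then the instance with variables
`x_1,…,x_n, y_1,…,y_n, z_1,…,z_t` and constraints `(x_u, y_v, z_i)` for `(u,v) ∈ M i`
is a conditionally non-redundant instance of `CSP(P | Q)` with
`P = {001,011,101,110}`, `Q = P ∪ {000}`, of size `t·r`. -/
theorem rs_graph_construction (n t r : ℕ) (M : Fin t → Finset (Fin n × Fin n))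
    (hcard : ∀ i, (M i).card = r)
    (hmatching : ∀ i, ∀ p ∈ M i, ∀ q ∈ M i, p ≠ q → p.1 ≠ q.1 ∧ p.2 ≠ q.2)
    (hdisjoint : ∀ i j, i ≠ j → Disjoint (M i) (M j))
    (hinduced : ∀ i j : Fin t, ∀ p ∈ M j,
      (∃ q ∈ M i, p.1 = q.1) → (∃ q ∈ M i, p.2 = q.2) → p ∈ M i) :
    ∀ E : Finset (Fin n × Fin n × Fin t),
      E = Finset.univ.biUnion (fun i => (M i).image fun p => (p.1, p.2, i)) →
      E.card = t * r ∧
      ∀ e ∈ E, ∃ (ψx ψy : Fin n → Bool) (ψz : Fin t → Bool),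
        ψx e.1 = false ∧ ψy e.2.1 = false ∧ ψz e.2.2 = false ∧
        ∀ e' ∈ E, e' ≠ e → (ψx e'.1, ψy e'.2.1, ψz e'.2.2) ∈ P299' := by
  rintro E rfl
  change (taggedEdges M).card = t * r ∧ ∀ e ∈ taggedEdges M, _
  refine ⟨by simp [card_taggedEdges, hcard], fun e he => ?_⟩
  refine ⟨fun a => decide ((∃ q ∈ M e.2.2, a = q.1) ∧ a ≠ e.1),
    fun b => decide ((∃ q ∈ M e.2.2, b = q.2) ∧ b ≠ e.2.1),
    fun j => decide (j ≠ e.2.2), by simp, by simp, by simp, fun e' he' hne => ?_⟩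
  rw [mem_P299'_iff]
  simp only [← Bool.decide_and, ← decide_not]
  exact decide_eq_decide.mpr
    (not_congr (tag_eq_iff_of_inducedMatchings hmatching hdisjoint hinduced he he' hne))
end

section
/- Counterexample to the core-structure conjecture: let V_1, V_2 be disjoint vertex sets with distinguished vertices u_1 ∈ V_1, u_2 ∈ V_2, let v be an additional vertex, and let H_1, H_2 be linear 3-uniform hypergraphs (pairwise hyperedge intersections of size ≤ 1) on V_1 \ {u_1} and V_2 \ {u_2} respectively. Then the 5-uniform hypergraph with hyperedges E = {{u_1, v} ∪ e : e ∈ H_1} ∪ {{u_2, v} ∪ e : e ∈ H_2} is a conditionally non-redundant instance of CSP(P_181 | Q_181): for each hyperedge f = {u_i, v} ∪ e, the assignment mapping all vertices of e together with v, u_1, u_2 to 1 and all other vertices to 0 gives f weight 5 and gives every other hyperedge a weight in {0, 2, 3}. -/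
/-- `P_181 | Q_181` weight condition for the other hyperedges: weight in `{0,2,3}`. -/
def okWeights : Set ℕ := {0, 2, 3}

lemma filter_insert_insert_card {V : Type*} [DecidableEq V]
    (a b : V) (s : Finset V) (p : V → Prop) [DecidablePred p]
    (hab : a ≠ b) (ha : a ∉ s) (hb : b ∉ s) (hpa : p a) (hpb : p b) :
    ((insert a (insert b s)).filter p).card = 2 + (s.filter p).card := by
  rw [Finset.filter_insert, if_pos hpa, Finset.filter_insert, if_pos hpb,
    Finset.card_insert_of_notMem (by
      simp only [Finset.mem_insert, Finset.mem_filter]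
      rintro (rfl | ⟨h, -⟩)
      · exact hab rfl
      · exact ha h),
    Finset.card_insert_of_notMem (by
      simp only [Finset.mem_filter]
      rintro ⟨h, -⟩
      exact hb h)]
  omega

/-- Counterexample to the core-structure conjecture. Let `V₁, V₂` be disjoint vertex
sets with distinguished vertices `u₁ ∈ V₁`, `u₂ ∈ V₂`, and let `v` be a further vertex
outside `V₁ ∪ V₂`. Let `H₁, H₂` be linear 3-uniform hypergraphs on `V₁ \ {u₁}` and
`V₂ \ {u₂}` respectively. Then the 5-uniform hypergraph with hyperedges
`E = {{u₁,v} ∪ e : e ∈ H₁} ∪ {{u₂,v} ∪ e : e ∈ H₂}` is a conditionally non-redundant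
instance of `CSP(P_181 | Q_181)`: for each hyperedge `f = {u_i, v} ∪ e`, the assignment
mapping the vertices of `e` together with `v, u₁, u₂` to `1` and everything else to `0`
gives `f` weight 5 and every other hyperedge a weight in `{0, 2, 3}`. -/
theorem core_structure_counterexample {V : Type*} [DecidableEq V]
    (V1 V2 : Set V) (hdisj : Disjoint V1 V2)
    (u1 u2 v : V) (hu1 : u1 ∈ V1) (hu2 : u2 ∈ V2) (hv : v ∉ V1 ∪ V2)
    (H1 H2 : Finset (Finset V))
    (hH1sub : ∀ e ∈ H1, (↑e : Set V) ⊆ V1 \ {u1}) (hH1card : ∀ e ∈ H1, e.card = 3)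
    (hH1lin : ∀ e ∈ H1, ∀ e' ∈ H1, e ≠ e' → (e ∩ e').card ≤ 1)
    (hH2sub : ∀ e ∈ H2, (↑e : Set V) ⊆ V2 \ {u2}) (hH2card : ∀ e ∈ H2, e.card = 3)
    (hH2lin : ∀ e ∈ H2, ∀ e' ∈ H2, e ≠ e' → (e ∩ e').card ≤ 1)
    (E : Finset (Finset V))
    (hE : E = H1.image (fun e => insert u1 (insert v e)) ∪
              H2.image (fun e => insert u2 (insert v e))) :
    (∀ e ∈ H1,
      let f := insert u1 (insert v e)
      let ψ : V → Bool := fun x => decide (x ∈ e ∨ x = v ∨ x = u1 ∨ x = u2)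
      (f.filter fun x => ψ x = true).card = 5 ∧
      ∀ f' ∈ E, f' ≠ f → (f'.filter fun x => ψ x = true).card ∈ okWeights) ∧
    (∀ e ∈ H2,
      let f := insert u2 (insert v e)
      let ψ : V → Bool := fun x => decide (x ∈ e ∨ x = v ∨ x = u1 ∨ x = u2)
      (f.filter fun x => ψ x = true).card = 5 ∧
      ∀ f' ∈ E, f' ≠ f → (f'.filter fun x => ψ x = true).card ∈ okWeights) := by
  subst hE
  have hv1 : v ∉ V1 := fun h => hv (Or.inl h)
  have hv2 : v ∉ V2 := fun h => hv (Or.inr h)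
  have hd : ∀ x, x ∈ V1 → x ∉ V2 := fun x hx => Set.disjoint_left.mp hdisj hx
  have hu12 : u1 ≠ u2 := fun h => hd u1 hu1 (h ▸ hu2)
  have h1 : ∀ e ∈ H1, u1 ∉ e ∧ v ∉ e ∧ u2 ∉ e ∧ ∀ x ∈ e, x ∈ V1 ∧ x ≠ u1 := by
    intro e he
    have hs := hH1sub e he
    refine ⟨fun h => (hs h).2 rfl, fun h => hv1 (hs h).1,
      fun h => hd u2 (hs h).1 hu2, fun x hx => ⟨(hs hx).1, (hs hx).2⟩⟩
  have h2 : ∀ e ∈ H2, u2 ∉ e ∧ v ∉ e ∧ u1 ∉ e ∧ ∀ x ∈ e, x ∈ V2 ∧ x ≠ u2 := by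
    intro e he
    have hs := hH2sub e he
    refine ⟨fun h => (hs h).2 rfl, fun h => hv2 (hs h).1,
      fun h => hd u1 hu1 (hs h).1, fun x hx => ⟨(hs hx).1, (hs hx).2⟩⟩
  constructor
  · intro e he
    intro f ψ
    obtain ⟨hu1e, hve, hu2e, hmem⟩ := h1 e he
    have hψ : ∀ x, (ψ x = true) ↔ (x ∈ e ∨ x = v ∨ x = u1 ∨ x = u2) := by
      intro x; simp [ψ]
    constructor
    · have hfeq : (f.filter fun x => ψ x = true) = f := by
        apply Finset.filter_true_of_mem
        intro x hx
        rw [hψ]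
        simp only [f, Finset.mem_insert] at hx
        rcases hx with rfl | rfl | hx
        · exact Or.inr (Or.inr (Or.inl rfl))
        · exact Or.inr (Or.inl rfl)
        · exact Or.inl hx
      rw [hfeq]
      show (insert u1 (insert v e)).card = 5
      rw [Finset.card_insert_of_notMem (by
          simp only [Finset.mem_insert]
          rintro (rfl | h)
          · exact hv1 hu1
          · exact hu1e h),
        Finset.card_insert_of_notMem hve, hH1card e he]
    · intro f' hf' hne
      rw [Finset.mem_union, Finset.mem_image, Finset.mem_image] at hf'
      rcases hf' with ⟨e', he', rfl⟩ | ⟨e', he', rfl⟩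
      · -- other edge from H1
        obtain ⟨hu1e', hve', hu2e', hmem'⟩ := h1 e' he'
        have hee' : e ≠ e' := by rintro rfl; exact hne rfl
        rw [filter_insert_insert_card u1 v e' _ (fun h => hv1 (h ▸ hu1))
            hu1e' hve'
            ((hψ u1).mpr (Or.inr (Or.inr (Or.inl rfl))))
            ((hψ v).mpr (Or.inr (Or.inl rfl)))]
        have heq : (e'.filter fun x => ψ x = true) = e' ∩ e := by
          ext x
          simp only [Finset.mem_filter, Finset.mem_inter, hψ]
          constructor
          · rintro ⟨hx, (h | rfl | rfl | rfl)⟩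
            · exact ⟨hx, h⟩
            · exact absurd hx hve'
            · exact absurd hx hu1e'
            · exact absurd hx hu2e'
          · rintro ⟨hx, hxe⟩
            exact ⟨hx, Or.inl hxe⟩
        rw [heq]
        have hle : (e' ∩ e).card ≤ 1 := by
          rw [Finset.inter_comm]
          exact hH1lin e he e' he' hee'
        simp only [okWeights, Set.mem_insert_iff, Set.mem_singleton_iff]
        omega
      · -- edge from H2
        obtain ⟨hu2e', hve', hu1e', hmem'⟩ := h2 e' he'
        rw [filter_insert_insert_card u2 v e' _ (fun h => hv2 (h ▸ hu2))
            hu2e' hve'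
            ((hψ u2).mpr (Or.inr (Or.inr (Or.inr rfl))))
            ((hψ v).mpr (Or.inr (Or.inl rfl)))]
        have heq : (e'.filter fun x => ψ x = true) = ∅ := by
          apply Finset.filter_false_of_mem
          intro x hx
          rw [hψ]
          obtain ⟨hxV2, hxu2⟩ := hmem' x hx
          rintro (h | rfl | rfl | rfl)
          · exact hd x ((h1 e he).2.2.2 x h).1 hxV2
          · exact hv2 hxV2
          · exact hd x hu1 hxV2
          · exact hxu2 rfl
        rw [heq]
        simp [okWeights]
  · intro e he
    intro f ψ
    obtain ⟨hu2e, hve, hu1e, hmem⟩ := h2 e he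
    have hψ : ∀ x, (ψ x = true) ↔ (x ∈ e ∨ x = v ∨ x = u1 ∨ x = u2) := by
      intro x; simp [ψ]
    constructor
    · have hfeq : (f.filter fun x => ψ x = true) = f := by
        apply Finset.filter_true_of_mem
        intro x hx
        rw [hψ]
        simp only [f, Finset.mem_insert] at hx
        rcases hx with rfl | rfl | hx
        · exact Or.inr (Or.inr (Or.inr rfl))
        · exact Or.inr (Or.inl rfl)
        · exact Or.inl hx
      rw [hfeq]
      show (insert u2 (insert v e)).card = 5
      rw [Finset.card_insert_of_notMem (by
          simp only [Finset.mem_insert]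
          rintro (rfl | h)
          · exact hv2 hu2
          · exact hu2e h),
        Finset.card_insert_of_notMem hve, hH2card e he]
    · intro f' hf' hne
      rw [Finset.mem_union, Finset.mem_image, Finset.mem_image] at hf'
      rcases hf' with ⟨e', he', rfl⟩ | ⟨e', he', rfl⟩
      · -- edge from H1
        obtain ⟨hu1e', hve', hu2e', hmem'⟩ := h1 e' he'
        rw [filter_insert_insert_card u1 v e' _ (fun h => hv1 (h ▸ hu1))
            hu1e' hve'
            ((hψ u1).mpr (Or.inr (Or.inr (Or.inl rfl))))
            ((hψ v).mpr (Or.inr (Or.inl rfl)))]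
        have heq : (e'.filter fun x => ψ x = true) = ∅ := by
          apply Finset.filter_false_of_mem
          intro x hx
          rw [hψ]
          obtain ⟨hxV1, hxu1⟩ := hmem' x hx
          rintro (h | rfl | rfl | rfl)
          · exact hd x hxV1 ((h2 e he).2.2.2 x h).1
          · exact hv1 hxV1
          · exact hxu1 rfl
          · exact hd x hxV1 hu2
        rw [heq]
        simp [okWeights]
      · -- other edge from H2
        obtain ⟨hu2e', hve', hu1e', hmem'⟩ := h2 e' he'
        have hee' : e ≠ e' := by rintro rfl; exact hne rfl
        rw [filter_insert_insert_card u2 v e' _ (fun h => hv2 (h ▸ hu2))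
            hu2e' hve'
            ((hψ u2).mpr (Or.inr (Or.inr (Or.inr rfl))))
            ((hψ v).mpr (Or.inr (Or.inl rfl)))]
        have heq : (e'.filter fun x => ψ x = true) = e' ∩ e := by
          ext x
          simp only [Finset.mem_filter, Finset.mem_inter, hψ]
          constructor
          · rintro ⟨hx, (h | rfl | rfl | rfl)⟩
            · exact ⟨hx, h⟩
            · exact absurd hx hve'
            · exact absurd hx hu1e'
            · exact absurd hx hu2e'
          · rintro ⟨hx, hxe⟩
            exact ⟨hx, Or.inl hxe⟩
        rw [heq]
        have hle : (e' ∩ e).card ≤ 1 := by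
          rw [Finset.inter_comm]
          exact hH2lin e he e' he' hee'
        simp only [okWeights, Set.mem_insert_iff, Set.mem_singleton_iff]
        omega
end
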